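/- arXiv:1811.04273 — 4 statements merged into one kernel-verified Lean document; each statement's English description precedes it below -/
import Mathlib

section
/- There exists a constant C > 0 such that for every positive integer k, |∫₀¹ x(1-x)·2·sin(2πx)·sin(2kπx) dx| ≥ C/k³. -/
open Real

noncomputable def Gaux (c x : ℝ) : ℝ :=
  (x - x^2) * Real.sin (c*x) / c + (1 - 2*x) * Real.cos (c*x) / c^2
    + 2 * Real.sin (c*x) / c^3

lemma hasDerivAt_Gaux (c : ℝ) (hc : c ≠ 0) (x : ℝ) :
    HasDerivAt (Gaux c) ((x - x^2) * Real.cos (c*x)) x := by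
  have hid : HasDerivAt (fun x : ℝ => c * x) c x := by
    simpa using (hasDerivAt_id x).const_mul c
  have hsin : HasDerivAt (fun x => Real.sin (c*x)) (Real.cos (c*x) * c) x :=
    (Real.hasDerivAt_sin (c*x)).comp x hid
  have hcos : HasDerivAt (fun x => Real.cos (c*x)) (-Real.sin (c*x) * c) x :=
    (Real.hasDerivAt_cos (c*x)).comp x hid
  have h1 : HasDerivAt (fun x : ℝ => x - x^2) (1 - 2*x) x := by
    have := (hasDerivAt_id x).sub (hasDerivAt_pow 2 x)
    exact this.congr_deriv (by norm_num)
  have h2 : HasDerivAt (fun x : ℝ => 1 - 2*x) (-2) x := by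
    have := (hasDerivAt_const x (1:ℝ)).sub ((hasDerivAt_id x).const_mul 2)
    exact this.congr_deriv (by norm_num)
  have H := (((h1.mul hsin).div_const c).add ((h2.mul hcos).div_const (c^2))).add
    ((hsin.const_mul 2).div_const (c^3))
  refine H.congr_deriv (Eq.symm ?_)
  field_simp
  ring

lemma sin_two_pi_nat (n : ℕ) : Real.sin (2*π*n) = 0 := by
  have h : 2*π*(n:ℝ) = (2*n : ℕ) * π := by push_cast; ring
  rw [h, Real.sin_nat_mul_pi]

lemma cos_two_pi_nat (n : ℕ) : Real.cos (2*π*n) = 1 := by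
  have h : 2*π*(n:ℝ) = (n:ℕ) * (2*π) := by push_cast; ring
  rw [h, Real.cos_nat_mul_two_pi]

lemma Gaux_eval (n : ℕ) (hn : 1 ≤ n) :
    Gaux (2*π*n) 1 - Gaux (2*π*n) 0 = -2/(2*π*n)^2 := by
  have hπ := Real.pi_pos
  have hn' : (0:ℝ) < n := by exact_mod_cast hn
  have hc : (2*π*(n:ℝ)) ≠ 0 := by positivity
  simp only [Gaux, mul_one, mul_zero]
  rw [sin_two_pi_nat, cos_two_pi_nat, Real.sin_zero, Real.cos_zero]
  field_simp
  ring

set_option maxHeartbeats 1000000 in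
theorem stmt1 :
    ∃ C > 0, ∀ k : ℕ, 1 ≤ k →
      |∫ x in (0:ℝ)..1, x * (1 - x) * 2 * Real.sin (2 * π * x) * Real.sin (2 * k * π * x)|
        ≥ C / (k : ℝ) ^ 3 := by
  have hπ := Real.pi_pos
  have hπlt : π < 3.2 := by linarith [Real.pi_lt_d2]
  refine ⟨1/8, by norm_num, ?_⟩
  intro k hk
  have hcont : IntervalIntegrable
      (fun x => x * (1 - x) * 2 * Real.sin (2 * π * x) * Real.sin (2 * k * π * x))
      MeasureTheory.volume 0 1 := by
    apply Continuous.intervalIntegrable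
    continuity
  rcases eq_or_lt_of_le hk with h1 | h2
  · -- k = 1
    have hk1 : k = 1 := h1.symm
    subst hk1
    have hc : (2*π*((2:ℕ):ℝ)) ≠ 0 := by push_cast; positivity
    have hF : ∀ x ∈ Set.uIcc (0:ℝ) 1, HasDerivAt
        (fun x => x^2/2 - x^3/3 - Gaux (2*π*(2:ℕ)) x)
        (x * (1 - x) * 2 * Real.sin (2 * π * x) * Real.sin (2 * (1:ℕ) * π * x)) x := by
      intro x _
      have h1 : HasDerivAt (fun x : ℝ => x^2/2 - x^3/3) (x - x^2) x := by
        have := ((hasDerivAt_pow 2 x).div_const 2).sub ((hasDerivAt_pow 3 x).div_const 3)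
        refine this.congr_deriv (Eq.symm ?_); ring
      have H := h1.sub (hasDerivAt_Gaux (2*π*(2:ℕ)) hc x)
      refine H.congr_deriv (Eq.symm ?_)
      have harg : (2*π*((2:ℕ):ℝ)) * x = 2*π*x + 2*π*x := by push_cast; ring
      rw [harg, Real.cos_add]
      have h1x : (2 * ((1:ℕ):ℝ) * π * x) = 2*π*x := by push_cast; ring
      rw [h1x]
      linear_combination (x - x^2) * Real.sin_sq_add_cos_sq (2*π*x)
    have hval := intervalIntegral.integral_eq_sub_of_hasDerivAt hF hcont
    rw [hval]
    have hG := Gaux_eval 2 (by norm_num)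
    have hE : (1:ℝ)^2/2 - 1^3/3 - Gaux (2*π*(2:ℕ)) 1 - ((0:ℝ)^2/2 - 0^3/3 - Gaux (2*π*(2:ℕ)) 0)
        = 1/6 + 2/(2*π*((2:ℕ):ℝ))^2 := by
      push_cast at hG ⊢
      linear_combination -hG
    rw [hE]
    have hpos : (0:ℝ) < 2/(2*π*((2:ℕ):ℝ))^2 := by push_cast; positivity
    rw [ge_iff_le, abs_of_pos (by linarith)]
    push_cast
    rw [one_pow]
    linarith
  · -- k ≥ 2
    obtain ⟨n, rfl⟩ : ∃ n, k = n + 1 := ⟨k - 1, by omega⟩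
    have hn : 1 ≤ n := by omega
    have hn' : (1:ℝ) ≤ n := by exact_mod_cast hn
    have hc1 : (2*π*((n:ℕ):ℝ)) ≠ 0 := by
      have : (0:ℝ) < n := by linarith
      positivity
    have hc2 : (2*π*(((n+2:ℕ)):ℝ)) ≠ 0 := by
      have : (0:ℝ) < ((n+2:ℕ):ℝ) := by push_cast; linarith
      positivity
    have hF : ∀ x ∈ Set.uIcc (0:ℝ) 1, HasDerivAt
        (fun x => Gaux (2*π*(n:ℕ)) x - Gaux (2*π*((n+2:ℕ))) x)
        (x * (1 - x) * 2 * Real.sin (2 * π * x) * Real.sin (2 * ((n+1:ℕ):ℝ) * π * x)) x := by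
      intro x _
      have H := (hasDerivAt_Gaux (2*π*(n:ℕ)) hc1 x).sub (hasDerivAt_Gaux (2*π*((n+2:ℕ))) hc2 x)
      refine H.congr_deriv (Eq.symm ?_)
      have e1 : (2*π*((n:ℕ):ℝ)) * x = 2 * ((n+1:ℕ):ℝ) * π * x - 2*π*x := by push_cast; ring
      have e2 : (2*π*(((n+2:ℕ)):ℝ)) * x = 2 * ((n+1:ℕ):ℝ) * π * x + 2*π*x := by push_cast; ring
      rw [e1, e2, Real.cos_sub, Real.cos_add]
      ring
    have hval := intervalIntegral.integral_eq_sub_of_hasDerivAt hF hcont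
    rw [hval]
    have hG1 := Gaux_eval n hn
    have hG2 := Gaux_eval (n+2) (by omega)
    have hE : Gaux (2*π*(n:ℕ)) 1 - Gaux (2*π*((n+2:ℕ))) 1 -
        (Gaux (2*π*(n:ℕ)) 0 - Gaux (2*π*((n+2:ℕ))) 0)
        = -(2/(2*π*((n:ℕ):ℝ))^2 - 2/(2*π*(((n+2:ℕ)):ℝ))^2) := by
      linear_combination hG1 - hG2
    rw [hE, abs_neg]
    set a : ℝ := (n:ℝ) with ha
    have haa : (0:ℝ) < a := by linarith
    have hcast : (((n+2:ℕ)):ℝ) = a + 2 := by push_cast; ring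
    have hcast2 : (((n+1:ℕ)):ℝ) = a + 1 := by push_cast; ring
    rw [hcast, hcast2]
    have hle : 2/(2*π*(a+2))^2 ≤ 2/(2*π*a)^2 := by
      apply div_le_div_of_nonneg_left (by norm_num) (by positivity)
      nlinarith [mul_nonneg (sq_nonneg π) (show (0:ℝ) ≤ 4*a+4 by linarith)]
    rw [ge_iff_le, abs_of_nonneg (by linarith)]
    clear hF hval hcont hE hG1 hG2 hc1 hc2
    have hπne : π ≠ 0 := ne_of_gt hπ
    have hane : a ≠ 0 := ne_of_gt haa
    have ha2ne : a + 2 ≠ 0 := by positivity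
    have e : 2/(2*π*a)^2 - 2/(2*π*(a+2))^2 = (2*(a+1))/(π^2*a^2*(a+2)^2) := by
      field_simp
      ring
    rw [e, div_le_div_iff₀ (by positivity) (by positivity)]
    have hπ2 : π^2 ≤ 10.24 := by nlinarith
    have ht : a*(a+2) ≤ (a+1)^2 := by nlinarith
    have ht0 : (0:ℝ) ≤ a*(a+2) := by positivity
    have h1 : (a*(a+2))^2 ≤ ((a+1)^2)^2 := by
      apply pow_le_pow_left₀ ht0 ht
    have h2 : π^2 * (a*(a+2))^2 ≤ 10.24 * ((a+1)^2)^2 :=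
      mul_le_mul hπ2 h1 (sq_nonneg _) (by norm_num)
    nlinarith [h2]
end

section
/- Let j, k, m, n be positive integers with (j,k) ≠ (m,n), j ≠ k, m ≠ n, and j² - k² - m² + n² = 0 with (j,k,m,n) not yielding equal multisets {j²,k²} = {m²,n²}. Then 1/j² - 1/k² - 1/m² + 1/n² ≠ 0. -/
/-!
Write `a, b, c, d` for the four squares. Eliminating `d = b + c - a` from the reciprocal relation
`1/a - 1/b - 1/c + 1/d = 0` (cleared of denominators) leaves `(a - b) (a - c) (b + c) = 0`.
For positive squares this forces `j = k`, or `j = m` and then `k = n`, i.e. equal multisets.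
-/

theorem sub_mul_sub_mul_add_eq_zero_of_inv_sub_sub_add_eq_zero {K : Type*} [Field K]
    {a b c d : K} (ha : a ≠ 0) (hb : b ≠ 0) (hc : c ≠ 0) (hd : d ≠ 0)
    (h : a - b - c + d = 0) (hinv : a⁻¹ - b⁻¹ - c⁻¹ + d⁻¹ = 0) :
    (a - b) * (a - c) * (b + c) = 0 := by
  have hcleared : b * c * d - a * c * d - a * b * d + a * b * c = 0 := by
    field_simp at hinv
    linear_combination hinv
  linear_combination hcleared - (b * c - a * c - a * b) * h

theorem eq_or_eq_of_inv_sub_sub_add_eq_zero {K : Type*} [Field K] [LinearOrder K]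
    [IsStrictOrderedRing K] {a b c d : K} (ha : 0 < a) (hb : 0 < b) (hc : 0 < c) (hd : 0 < d)
    (h : a - b - c + d = 0) (hinv : a⁻¹ - b⁻¹ - c⁻¹ + d⁻¹ = 0) :
    a = b ∨ a = c := by
  have hprod := sub_mul_sub_mul_add_eq_zero_of_inv_sub_sub_add_eq_zero
    ha.ne' hb.ne' hc.ne' hd.ne' h hinv
  rw [mul_eq_zero, mul_eq_zero, sub_eq_zero, sub_eq_zero] at hprod
  rcases hprod with (hab | hac) | hbc
  · exact .inl hab
  · exact .inr hac
  · exact absurd hbc (add_pos hb hc).ne'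

theorem stmt3_general (j k m n : ℕ) (hj : 0 < j) (hk : 0 < k) (hm : 0 < m) (hn : 0 < n)
    (hjk : j ≠ k)
    (hres : (j : ℤ) ^ 2 - (k : ℤ) ^ 2 - (m : ℤ) ^ 2 + (n : ℤ) ^ 2 = 0)
    (hmulti : ({j ^ 2, k ^ 2} : Multiset ℕ) ≠ {m ^ 2, n ^ 2}) :
    1 / (j : ℝ) ^ 2 - 1 / (k : ℝ) ^ 2 - 1 / (m : ℝ) ^ 2 + 1 / (n : ℝ) ^ 2 ≠ 0 := by
  intro hinv
  have hresℝ : (j : ℝ) ^ 2 - (k : ℝ) ^ 2 - (m : ℝ) ^ 2 + (n : ℝ) ^ 2 = 0 := by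
    exact_mod_cast hres
  simp only [one_div] at hinv
  rcases eq_or_eq_of_inv_sub_sub_add_eq_zero (by positivity) (by positivity) (by positivity)
    (by positivity) hresℝ hinv with hjkℝ | hjmℝ
  · have hsq : j ^ 2 = k ^ 2 := by exact_mod_cast hjkℝ
    exact hjk (Nat.pow_left_injective two_ne_zero hsq)
  · have hjm : j ^ 2 = m ^ 2 := by exact_mod_cast hjmℝ
    have hkn : k ^ 2 = n ^ 2 := by
      have hknℝ : (k : ℝ) ^ 2 = (n : ℝ) ^ 2 := by linarith
      exact_mod_cast hknℝ
    exact hmulti (by rw [hjm, hkn])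

theorem stmt3 (j k m n : ℕ) (hj : 0 < j) (hk : 0 < k) (hm : 0 < m) (hn : 0 < n)
    (hpair : (j, k) ≠ (m, n)) (hjk : j ≠ k) (hmn : m ≠ n)
    (hres : (j : ℤ) ^ 2 - (k : ℤ) ^ 2 - (m : ℤ) ^ 2 + (n : ℤ) ^ 2 = 0)
    (hmulti : ({j ^ 2, k ^ 2} : Multiset ℕ) ≠ {m ^ 2, n ^ 2}) :
    1 / (j : ℝ) ^ 2 - 1 / (k : ℝ) ^ 2 - 1 / (m : ℝ) ^ 2 + 1 / (n : ℝ) ^ 2 ≠ 0 :=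
  stmt3_general j k m n hj hk hm hn hjk hres hmulti
end

section
/- Let a_k = 27√3·k²/((36k²-1)π) for positive integers k. For all positive integers j, k, m, n with j² - k² - m² + n² = 0, j ≠ k, m ≠ n and (j,k) ≠ (m,n) (as ordered pairs of distinct indices), it holds a_j - a_k - a_m + a_n ≠ 0. -/
open Real

/-- The diagonal matrix elements `a_k = ⟨φ_k, B φ_k⟩` in the star-graph example. -/
noncomputable def starDiag (k : ℕ) : ℝ :=
  27 * Real.sqrt 3 * (k : ℝ) ^ 2 / ((36 * (k : ℝ) ^ 2 - 1) * π)


private lemma starDiag_aux (A B C D : ℝ) (hA' : A ≠ 0) (hB' : B ≠ 0) (hC' : C ≠ 0)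
    (hD' : D ≠ 0) (hSum : A + D = B + C) :
    1/A - 1/B - 1/C + 1/D = (A+D)*(B*C - A*D)/(A*B*C*D) := by
  have hCval : C = A + D - B := by linarith
  subst hCval
  field_simp
  ring

theorem stmt6 (j k m n : ℕ) (hj : 0 < j) (hk : 0 < k) (hm : 0 < m) (hn : 0 < n)
    (hres : (j : ℤ) ^ 2 - (k : ℤ) ^ 2 - (m : ℤ) ^ 2 + (n : ℤ) ^ 2 = 0)
    (hjk : j ≠ k) (hmn : m ≠ n) (hpair : (j, k) ≠ (m, n)) :
    starDiag j - starDiag k - starDiag m + starDiag n ≠ 0 := by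
  have hπ : (π : ℝ) ≠ 0 := Real.pi_ne_zero
  have hπpos : (0:ℝ) < π := Real.pi_pos
  have hs3 : (0:ℝ) < Real.sqrt 3 := Real.sqrt_pos.mpr (by norm_num)
  have hj1 : (1:ℝ) ≤ (j:ℝ) := by exact_mod_cast hj
  have hk1 : (1:ℝ) ≤ (k:ℝ) := by exact_mod_cast hk
  have hm1 : (1:ℝ) ≤ (m:ℝ) := by exact_mod_cast hm
  have hn1 : (1:ℝ) ≤ (n:ℝ) := by exact_mod_cast hn
  obtain ⟨A, hAdef⟩ : ∃ A : ℝ, A = 36*(j:ℝ)^2 - 1 := ⟨_, rfl⟩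
  obtain ⟨B, hBdef⟩ : ∃ B : ℝ, B = 36*(k:ℝ)^2 - 1 := ⟨_, rfl⟩
  obtain ⟨C, hCdef⟩ : ∃ C : ℝ, C = 36*(m:ℝ)^2 - 1 := ⟨_, rfl⟩
  obtain ⟨D, hDdef⟩ : ∃ D : ℝ, D = 36*(n:ℝ)^2 - 1 := ⟨_, rfl⟩
  have hA : 0 < A := by rw [hAdef]; nlinarith
  have hB : 0 < B := by rw [hBdef]; nlinarith
  have hC : 0 < C := by rw [hCdef]; nlinarith
  have hD : 0 < D := by rw [hDdef]; nlinarith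
  have hA' := hA.ne'
  have hB' := hB.ne'
  have hC' := hC.ne'
  have hD' := hD.ne'
  have hresR : (j:ℝ)^2 + (n:ℝ)^2 = (k:ℝ)^2 + (m:ℝ)^2 := by
    have : (j:ℤ)^2 + (n:ℤ)^2 = (k:ℤ)^2 + (m:ℤ)^2 := by linarith
    exact_mod_cast this
  have hSum : A + D = B + C := by rw [hAdef, hBdef, hCdef, hDdef]; linarith
  -- key integer fact: BC ≠ AD
  have hint : (36*(k:ℤ)^2-1)*(36*(m:ℤ)^2-1) ≠ (36*(j:ℤ)^2-1)*(36*(n:ℤ)^2-1) := by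
    intro heq
    have h1296 : (1296:ℤ) * ((j:ℤ)^2*(n:ℤ)^2) = 1296 * ((k:ℤ)^2*(m:ℤ)^2) := by
      linear_combination -heq + 36 * hres
    have hprod : (j:ℤ)^2*(n:ℤ)^2 = (k:ℤ)^2*(m:ℤ)^2 :=
      mul_left_cancel₀ (by norm_num : (1296:ℤ) ≠ 0) h1296
    have hfac : ((j:ℤ)^2 - (k:ℤ)^2) * ((j:ℤ)^2 - (m:ℤ)^2) = 0 := by
      linear_combination (j:ℤ)^2 * hres - hprod
    rcases mul_eq_zero.mp hfac with h | h
    · have h2 : j^2 = k^2 := by exact_mod_cast (by linarith : (j:ℤ)^2 = (k:ℤ)^2)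
      exact hjk (Nat.pow_left_injective (by norm_num) h2)
    · have h2 : j^2 = m^2 := by exact_mod_cast (by linarith : (j:ℤ)^2 = (m:ℤ)^2)
      have hjm' : j = m := Nat.pow_left_injective (by norm_num) h2
      have h3 : k^2 = n^2 := by exact_mod_cast (by linarith : (k:ℤ)^2 = (n:ℤ)^2)
      have hkn' : k = n := Nat.pow_left_injective (by norm_num) h3
      exact hpair (by rw [hjm', hkn'])
  have hBCAD : B * C - A * D ≠ 0 := by
    have : ((36*(k:ℤ)^2-1)*(36*(m:ℤ)^2-1) : ℝ) ≠ ((36*(j:ℤ)^2-1)*(36*(n:ℤ)^2-1) : ℝ) := by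
      exact_mod_cast hint
    rw [hAdef, hBdef, hCdef, hDdef]
    intro h
    apply this
    push_cast
    linarith
  -- rewrite each starDiag
  have e1 : starDiag j = (27*Real.sqrt 3/(36*π)) * (1 + 1/A) := by
    unfold starDiag; rw [hAdef]; rw [hAdef] at hA'; field_simp; rw [one_add_div (by rw [mul_comm]; exact hA')]; ring
  have e2 : starDiag k = (27*Real.sqrt 3/(36*π)) * (1 + 1/B) := by
    unfold starDiag; rw [hBdef]; rw [hBdef] at hB'; field_simp; rw [one_add_div (by rw [mul_comm]; exact hB')]; ring
  have e3 : starDiag m = (27*Real.sqrt 3/(36*π)) * (1 + 1/C) := by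
    unfold starDiag; rw [hCdef]; rw [hCdef] at hC'; field_simp; rw [one_add_div (by rw [mul_comm]; exact hC')]; ring
  have e4 : starDiag n = (27*Real.sqrt 3/(36*π)) * (1 + 1/D) := by
    unfold starDiag; rw [hDdef]; rw [hDdef] at hD'; field_simp; rw [one_add_div (by rw [mul_comm]; exact hD')]; ring
  have e : starDiag j - starDiag k - starDiag m + starDiag n
      = (27*Real.sqrt 3/(36*π)) * (1/A - 1/B - 1/C + 1/D) := by
    rw [e1, e2, e3, e4]; ring
  have e5 : 1/A - 1/B - 1/C + 1/D = (A+D)*(B*C - A*D)/(A*B*C*D) :=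
    starDiag_aux A B C D hA' hB' hC' hD' hSum
  rw [e, e5]
  apply mul_ne_zero
  · positivity
  · apply div_ne_zero
    · exact mul_ne_zero (by positivity) hBCAD
    · positivity
end

section
/- The real numbers 1, ∛2, ∛5 are linearly independent over ℚ. -/
lemma aux_no_int_cube {m : ℤ} (h1 : 1 < m) (h2 : m < 27) (h8 : m ≠ 8) :
    ∀ y : ℤ, y ^ 3 ≠ m := by
  intro y hy
  have hy0 : 0 < y := by nlinarith [sq_nonneg y]
  have hy3 : y < 3 := by nlinarith [sq_nonneg y, sq_nonneg (y - 3), sq_nonneg (y + 3)]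
  interval_cases y <;> omega

lemma aux_rat_cube {r : ℚ} {m : ℤ} (hm : ∀ y : ℤ, y ^ 3 ≠ m) (h : r ^ 3 = (m : ℚ)) :
    False := by
  have hx : ((r : ℝ)) ^ 3 = (m : ℤ) := by exact_mod_cast h
  obtain ⟨y, hy⟩ := not_not.mp
    (fun hv => Rat.not_irrational r (irrational_nrt_of_notint_nrt 3 m hx hv (by norm_num)))
  rw [hy] at hx
  exact hm y (by exact_mod_cast hx)

theorem stmt9 :
    LinearIndependent ℚ ![(1 : ℝ), (2 : ℝ) ^ ((1 : ℝ) / 3), (5 : ℝ) ^ ((1 : ℝ) / 3)] := by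
  set α : ℝ := (2 : ℝ) ^ ((1 : ℝ) / 3) with hα
  set β : ℝ := (5 : ℝ) ^ ((1 : ℝ) / 3) with hβ
  have hα3 : α ^ 3 = 2 := by
    rw [hα, ← Real.rpow_natCast ((2:ℝ) ^ ((1:ℝ)/3)) 3, ← Real.rpow_mul (by norm_num)]
    norm_num
  have hβ3 : β ^ 3 = 5 := by
    rw [hβ, ← Real.rpow_natCast ((5:ℝ) ^ ((1:ℝ)/3)) 3, ← Real.rpow_mul (by norm_num)]
    norm_num
  rw [Fintype.linearIndependent_iff]
  intro g hg
  simp only [Fin.sum_univ_three, Matrix.cons_val_zero, Matrix.cons_val_one, Matrix.head_cons,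
    Matrix.cons_val_two, Matrix.tail_cons, Rat.smul_def, mul_one] at hg
  set a : ℚ := g 0 with ha
  set b : ℚ := g 1 with hb
  set c : ℚ := g 2 with hc
  have h : (a : ℝ) + b * α + c * β = 0 := hg
  have key : 3 * (a : ℝ) * b * c * (α * β) = a ^ 3 + 2 * b ^ 3 + 5 * c ^ 3 := by
    linear_combination (-(a:ℝ)^2 - (b*α)^2 - (c*β)^2 + a*b*α + b*α*c*β + a*c*β) * h +
      b^3 * hα3 + c^3 * hβ3
  have habc : ∀ i, g i = 0 := by
    by_cases hb0 : b = 0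
    · by_cases hc0 : c = 0
      · have ha0 : a = 0 := by
          have : (a : ℝ) = 0 := by rw [hb0, hc0] at h; push_cast at h; linarith
          exact_mod_cast this
        intro i; fin_cases i <;> simp [← ha, ← hb, ← hc, ha0, hb0, hc0]
      · exfalso
        have hβq : (β : ℝ) = ((-a / c : ℚ) : ℝ) := by
          rw [hb0] at h; push_cast at h ⊢
          field_simp
          have : (c : ℝ) ≠ 0 := by exact_mod_cast hc0
          field_simp at h ⊢
          linarith
        refine aux_rat_cube (m := 5) (r := -a / c) (aux_no_int_cube (by norm_num) (by norm_num) (by norm_num)) ?_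
        have : ((-a / c : ℚ) : ℝ) ^ 3 = ((5 : ℤ) : ℝ) := by rw [← hβq]; rw [hβ3]; norm_num
        exact_mod_cast this
    · by_cases hc0 : c = 0
      · exfalso
        have hαq : (α : ℝ) = ((-a / b : ℚ) : ℝ) := by
          rw [hc0] at h; push_cast at h ⊢
          have : (b : ℝ) ≠ 0 := by exact_mod_cast hb0
          field_simp at h ⊢
          linarith
        refine aux_rat_cube (m := 2) (r := -a / b) (aux_no_int_cube (by norm_num) (by norm_num) (by norm_num)) ?_
        have : ((-a / b : ℚ) : ℝ) ^ 3 = ((2 : ℤ) : ℝ) := by rw [← hαq]; rw [hα3]; norm_num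
        exact_mod_cast this
      · by_cases ha0 : a = 0
        · exfalso
          have hq : (2 : ℚ) * b ^ 3 + 5 * c ^ 3 = 0 := by
            have : (2 : ℝ) * b ^ 3 + 5 * c ^ 3 = 0 := by
              rw [ha0] at key; push_cast at key; linarith
            exact_mod_cast this
          refine aux_rat_cube (m := 20) (r := -2 * b / c) (aux_no_int_cube (by norm_num) (by norm_num) (by norm_num)) ?_
          have hcne : (c : ℚ) ≠ 0 := hc0
          field_simp
          push_cast; linear_combination (-4) * hq
        · exfalso
          set q : ℚ := (a ^ 3 + 2 * b ^ 3 + 5 * c ^ 3) / (3 * a * b * c) with hqdef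
          have har : (a : ℝ) ≠ 0 := by exact_mod_cast ha0
          have hbr : (b : ℝ) ≠ 0 := by exact_mod_cast hb0
          have hcr : (c : ℝ) ≠ 0 := by exact_mod_cast hc0
          have h3abc : (3 : ℝ) * a * b * c ≠ 0 :=
            mul_ne_zero (mul_ne_zero (mul_ne_zero three_ne_zero har) hbr) hcr
          have hq : (α * β) = ((q : ℚ) : ℝ) := by
            rw [hqdef]; push_cast
            field_simp
            linarith [key]
          refine aux_rat_cube (m := 10) (r := q) (aux_no_int_cube (by norm_num) (by norm_num) (by norm_num)) ?_
          have : ((q : ℚ) : ℝ) ^ 3 = ((10 : ℤ) : ℝ) := by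
            rw [← hq, mul_pow, hα3, hβ3]; norm_num
          exact_mod_cast this
  exact habc
end
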